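/- The minimum over all 1 ≤ i ≤ j ≤ n of Θ(τq, τd[i:j]) equals the minimum over 1 ≤ j' ≤ n of C(m, j'). -/
import Mathlib


/-- `a` is a matching sequence on indices `1..m` with values in `[lo, hi]`:
it is monotone nondecreasing on `{1,…,m}` and `lo ≤ a i ≤ hi` there. -/
def IsMatchingOn (m lo hi : ℕ) (a : ℕ → ℕ) : Prop :=
  (∀ i, 1 ≤ i → i ≤ m → lo ≤ a i ∧ a i ≤ hi) ∧
  ∀ i j, 1 ≤ i → i ≤ j → j ≤ m → a i ≤ a j

/-- Conversion cost `Cost(i, a)` of the `i`-th query point under a matching sequence `a`. -/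
noncomputable def convCost (CostDel CostSub : ℕ → ℕ → ℝ) (CostIns : ℕ → ℕ → ℕ → ℝ)
    (a : ℕ → ℕ) (i : ℕ) : ℝ :=
  if i = 1 then CostSub 1 (a 1)
  else if a (i - 1) = a i then CostDel i (a i)
  else if a (i - 1) = a i - 1 then CostSub i (a i)
  else CostIns i (a (i - 1)) (a i)

/-- Total conversion cost `Σ_{k=1}^{m} Cost(k, a)`. -/
noncomputable def totalCost (CostDel CostSub : ℕ → ℕ → ℝ) (CostIns : ℕ → ℕ → ℕ → ℝ)
    (m : ℕ) (a : ℕ → ℕ) : ℝ :=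
  ∑ k ∈ Finset.Icc 1 m, convCost CostDel CostSub CostIns a k

/-- The general distance `Θ(τq, τd[i:j])`: the minimum over matching sequences `a`
with all values in `{i,…,j}` of
`Insert(i..a(1)−1) + Σ_{k=1}^{m} Cost(k,a) + Insert(a(m)+1..j)`. -/
noncomputable def Theta (Ins : ℕ → ℕ → ℝ) (CostDel CostSub : ℕ → ℕ → ℝ)
    (CostIns : ℕ → ℕ → ℕ → ℝ) (m i j : ℕ) : ℝ :=
  sInf {v : ℝ | ∃ a : ℕ → ℕ, IsMatchingOn m i j a ∧
    v = Ins i (a 1 - 1) + totalCost CostDel CostSub CostIns m a + Ins (a m + 1) j}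

/-- The optimal partial matching-conversion cost `C(i,j)`: the minimum over
monotone nondecreasing `a : {1,…,i} → {1,…,n}` with `a i = j` of `Σ_{k=1}^{i} Cost(k,a)`. -/
noncomputable def Cpm (CostDel CostSub : ℕ → ℕ → ℝ) (CostIns : ℕ → ℕ → ℕ → ℝ)
    (n i j : ℕ) : ℝ :=
  sInf {v : ℝ | ∃ a : ℕ → ℕ, IsMatchingOn i 1 n a ∧ a i = j ∧
    v = totalCost CostDel CostSub CostIns i a}


lemma convCost_nonneg (CostDel CostSub : ℕ → ℕ → ℝ) (CostIns : ℕ → ℕ → ℕ → ℝ)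
    (hDel : ∀ i j, 0 ≤ CostDel i j) (hSub : ∀ i j, 0 ≤ CostSub i j)
    (hIns : ∀ i k j, 0 ≤ CostIns i k j) (a : ℕ → ℕ) (i : ℕ) :
    0 ≤ convCost CostDel CostSub CostIns a i := by
  unfold convCost
  split_ifs <;> first | exact hSub _ _ | exact hDel _ _ | exact hIns _ _ _

lemma totalCost_nonneg (CostDel CostSub : ℕ → ℕ → ℝ) (CostIns : ℕ → ℕ → ℕ → ℝ)
    (hDel : ∀ i j, 0 ≤ CostDel i j) (hSub : ∀ i j, 0 ≤ CostSub i j)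
    (hIns : ∀ i k j, 0 ≤ CostIns i k j) (m : ℕ) (a : ℕ → ℕ) :
    0 ≤ totalCost CostDel CostSub CostIns m a :=
  Finset.sum_nonneg fun k _ => convCost_nonneg _ _ _ hDel hSub hIns a k

/-- The minimum over all `1 ≤ i ≤ j ≤ n` of `Θ(τq, τd[i:j])` equals the
minimum over `1 ≤ j' ≤ n` of `C(m, j')`. -/
theorem min_theta_eq_min_Cpm
    (m n : ℕ) (hm : 1 ≤ m) (hn : 1 ≤ n)
    (CostDel CostSub : ℕ → ℕ → ℝ) (CostIns : ℕ → ℕ → ℕ → ℝ) (Ins : ℕ → ℕ → ℝ)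
    (hDel : ∀ i j, 0 ≤ CostDel i j) (hSub : ∀ i j, 0 ≤ CostSub i j)
    (hIns : ∀ i k j, 0 ≤ CostIns i k j) (hInsNN : ∀ x y, 0 ≤ Ins x y)
    (hInsEmpty : ∀ x y, y < x → Ins x y = 0) :
    sInf {v : ℝ | ∃ i j : ℕ, 1 ≤ i ∧ i ≤ j ∧ j ≤ n ∧
        v = Theta Ins CostDel CostSub CostIns m i j} =
      sInf {v : ℝ | ∃ j' : ℕ, 1 ≤ j' ∧ j' ≤ n ∧
        v = Cpm CostDel CostSub CostIns n m j'} := by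

  set TC := totalCost CostDel CostSub CostIns m with hTC
  have hTCnn : ∀ a, 0 ≤ TC a := fun a => totalCost_nonneg _ _ _ hDel hSub hIns m a
  have hThetaNN : ∀ i j, 0 ≤ Theta Ins CostDel CostSub CostIns m i j := by
    intro i j
    apply Real.sInf_nonneg
    rintro v ⟨a, _, rfl⟩
    have := hTCnn a
    have := hInsNN i (a 1 - 1); have := hInsNN (a m + 1) j
    linarith
  have hCpmNN : ∀ j', 0 ≤ Cpm CostDel CostSub CostIns n m j' := by
    intro j'
    apply Real.sInf_nonneg
    rintro v ⟨a, _, _, rfl⟩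
    exact hTCnn a
  have hSbdd : BddBelow {v : ℝ | ∃ i j : ℕ, 1 ≤ i ∧ i ≤ j ∧ j ≤ n ∧
      v = Theta Ins CostDel CostSub CostIns m i j} := by
    refine ⟨0, ?_⟩
    rintro v ⟨i, j, _, _, _, rfl⟩
    exact hThetaNN i j
  have hTbdd : BddBelow {v : ℝ | ∃ j' : ℕ, 1 ≤ j' ∧ j' ≤ n ∧
      v = Cpm CostDel CostSub CostIns n m j'} := by
    refine ⟨0, ?_⟩
    rintro v ⟨j', _, _, rfl⟩
    exact hCpmNN j'
  apply le_antisymm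
  · -- sInf S ≤ sInf T
    refine le_csInf ⟨_, 1, le_rfl, hn, rfl⟩ ?_
    rintro t ⟨j', hj1, hjn, rfl⟩
    -- show sInf S ≤ Cpm n m j'
    refine le_csInf ⟨TC (fun _ => j'), fun _ => j',
      ⟨fun i _ _ => ⟨hj1, hjn⟩, fun _ _ _ _ _ => le_rfl⟩, rfl, rfl⟩ ?_
    rintro v ⟨a, ha, ham, rfl⟩
    have h1m := ha.1 1 le_rfl hm
    have hmm := ha.1 m hm le_rfl
    have hmono : ∀ i, 1 ≤ i → i ≤ m → a 1 ≤ a i ∧ a i ≤ a m := by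
      intro i hi1 him
      exact ⟨ha.2 1 i le_rfl hi1 him, ha.2 i m hi1 him le_rfl⟩
    have hmem : Theta Ins CostDel CostSub CostIns m (a 1) (a m) ∈
        {v : ℝ | ∃ i j : ℕ, 1 ≤ i ∧ i ≤ j ∧ j ≤ n ∧
          v = Theta Ins CostDel CostSub CostIns m i j} :=
      ⟨a 1, a m, h1m.1, (hmono m hm le_rfl).1, hmm.2, rfl⟩
    refine (csInf_le hSbdd hmem).trans ?_
    have hTbd : BddBelow {v : ℝ | ∃ b : ℕ → ℕ, IsMatchingOn m (a 1) (a m) b ∧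
        v = Ins (a 1) (b 1 - 1) + TC b + Ins (b m + 1) (a m)} := by
      refine ⟨0, ?_⟩
      rintro v ⟨b, _, rfl⟩
      have := hTCnn b
      have := hInsNN (a 1) (b 1 - 1); have := hInsNN (b m + 1) (a m)
      linarith
    have hmem2 : Ins (a 1) (a 1 - 1) + TC a + Ins (a m + 1) (a m) ∈
        {v : ℝ | ∃ b : ℕ → ℕ, IsMatchingOn m (a 1) (a m) b ∧
          v = Ins (a 1) (b 1 - 1) + TC b + Ins (b m + 1) (a m)} :=
      ⟨a, ⟨hmono, ha.2⟩, rfl⟩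
    have hle := csInf_le hTbd hmem2
    have e1 : Ins (a 1) (a 1 - 1) = 0 := hInsEmpty _ _ (by omega)
    have e2 : Ins (a m + 1) (a m) = 0 := hInsEmpty _ _ (by omega)
    rw [e1, e2] at hle
    simpa [Theta, hTC] using hle
  · -- sInf T ≤ sInf S
    refine le_csInf ⟨_, 1, 1, le_rfl, le_rfl, hn, rfl⟩ ?_
    rintro s ⟨i, j, hi1, hij, hjn, rfl⟩
    refine le_csInf ⟨Ins i ((fun _ => i) 1 - 1) + TC (fun _ => i) + Ins ((fun _ => i) m + 1) j,
      fun _ => i, ⟨fun _ _ _ => ⟨le_rfl, hij⟩, fun _ _ _ _ _ => le_rfl⟩, rfl⟩ ?_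
    rintro v ⟨a, ha, rfl⟩
    have h1m := ha.1 1 le_rfl hm
    have hmm := ha.1 m hm le_rfl
    have hmem : Cpm CostDel CostSub CostIns n m (a m) ∈
        {v : ℝ | ∃ j' : ℕ, 1 ≤ j' ∧ j' ≤ n ∧ v = Cpm CostDel CostSub CostIns n m j'} :=
      ⟨a m, le_trans hi1 hmm.1, le_trans hmm.2 hjn, rfl⟩
    refine (csInf_le hTbdd hmem).trans ?_
    have hCbd : BddBelow {v : ℝ | ∃ b : ℕ → ℕ, IsMatchingOn m 1 n b ∧ b m = a m ∧
        v = TC b} := by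
      refine ⟨0, ?_⟩
      rintro v ⟨b, _, _, rfl⟩
      exact hTCnn b
    have hmem2 : TC a ∈ {v : ℝ | ∃ b : ℕ → ℕ, IsMatchingOn m 1 n b ∧ b m = a m ∧
        v = TC b} := by
      refine ⟨a, ⟨?_, ha.2⟩, rfl, rfl⟩
      intro k hk1 hkm
      exact ⟨le_trans hi1 (ha.1 k hk1 hkm).1, le_trans (ha.1 k hk1 hkm).2 hjn⟩
    have hle : Cpm CostDel CostSub CostIns n m (a m) ≤ TC a := csInf_le hCbd hmem2
    have := hInsNN i (a 1 - 1); have := hInsNN (a m + 1) j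
    simp only [Cpm, hTC] at hle ⊢
    linarith
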